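/- The I-sparse set topology is not first countable: for every b ∈ ℝ and every sequence (U_n)_{n∈ℕ} of members of 𝒰 each containing b, there exists V ∈ 𝒰 with b ∈ V such that U_n ⊄ V for every n; hence no point of ℝ admits a countable neighborhood basis in (ℝ, 𝒰). -/

import Mathlib

open MeasureTheory Filter Set
open scoped ENNReal

noncomputable section

/-- A nontrivial admissible ideal of subsets of ℕ: closed under subsets and
finite unions, contains every finite set, and does not contain ℕ itself. -/
structure AdmissibleIdeal : Type where
  carrier : Set (Set ℕ)
  subset_mem : ∀ ⦃A B : Set ℕ⦄, A ∈ carrier → B ⊆ A → B ∈ carrier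
  union_mem : ∀ ⦃A B : Set ℕ⦄, A ∈ carrier → B ∈ carrier → A ∪ B ∈ carrier
  finite_mem : ∀ A : Set ℕ, A.Finite → A ∈ carrier
  univ_not_mem : (Set.univ : Set ℕ) ∉ carrier

/-- The filter F(I) = {M ⊆ ℕ : ℕ \ M ∈ I} associated with the ideal I. -/
def AdmissibleIdeal.filter (I : AdmissibleIdeal) : Filter ℕ :=
  Filter.comk (· ∈ I.carrier) (I.finite_mem ∅ Set.finite_empty)
    (fun _t ht _s hs => I.subset_mem ht hs)
    (fun _s hs _t ht => I.union_mem hs ht)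

/-- A sequence of closed intervals admissible about the point `p`:
each `J n` is a closed interval containing `p`, and
`{n : 0 < λ(J n) < 1/n} ∈ F(I)`. -/
def AdmissibleSeq (I : AdmissibleIdeal) (p : ℝ) (J : ℕ → Set ℝ) : Prop :=
  (∀ n, ∃ a b : ℝ, a ≤ b ∧ J n = Set.Icc a b) ∧ (∀ n, p ∈ J n) ∧
    {n : ℕ | 0 < volume (J n) ∧ volume (J n) < (n : ℝ≥0∞)⁻¹} ∈ I.filter

/-- The sequence n ↦ λ(E ∩ J n)/λ(J n) (interpreted as 0 when λ(J n) = 0). -/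
def ratioSeq (E : Set ℝ) (J : ℕ → Set ℝ) : ℕ → ℝ :=
  fun n => (volume (E ∩ J n) / volume (J n)).toReal

/-- Upper I-density of `E` at `p`: sup over admissible sequences of the
limsup along `F(I)` of the measure ratios. -/
def upperIDensity (I : AdmissibleIdeal) (p : ℝ) (E : Set ℝ) : ℝ :=
  sSup {l : ℝ | ∃ J : ℕ → Set ℝ, AdmissibleSeq I p J ∧
    l = Filter.limsup (ratioSeq E J) I.filter}

/-- Lower I-density of `E` at `p`: inf over admissible sequences of the
liminf along `F(I)` of the measure ratios. -/
def lowerIDensity (I : AdmissibleIdeal) (p : ℝ) (E : Set ℝ) : ℝ :=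
  sInf {l : ℝ | ∃ J : ℕ → Set ℝ, AdmissibleSeq I p J ∧
    l = Filter.liminf (ratioSeq E J) I.filter}

/-- `C` is a measurable cover of `A`. -/
def IsMeasurableCover (C A : Set ℝ) : Prop :=
  MeasurableSet C ∧ A ⊆ C ∧
    ∀ F : Set ℝ, MeasurableSet F → F ⊆ C \ A → volume F = 0

/-- `A` is I-sparse at `x`, i.e. `A ∈ S_I(x)`. -/
def ISparseAt (I : AdmissibleIdeal) (A : Set ℝ) (x : ℝ) : Prop :=
  ∀ B : Set ℝ, MeasurableSet B → upperIDensity I x B < 1 →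
    ∀ C : Set ℝ, IsMeasurableCover C A → upperIDensity I x (C ∪ B) < 1

/-- The I-density topology T_I. -/
def IDensityTopology (I : AdmissibleIdeal) : Set (Set ℝ) :=
  {E | MeasurableSet E ∧ ∀ x ∈ E, lowerIDensity I x E = 1}

/-- The I-sparse set topology 𝒰. -/
def sparseTop (I : AdmissibleIdeal) : Set (Set ℝ) :=
  {E | ∀ x ∈ E, ISparseAt I Eᶜ x}

/-!
A null set is I-sparse everywhere: a measurable cover of it is again null, and adding a null
set does not change upper I-density. Hence the complement of every countable set is open. On the
other hand `{b}ᶜ` is not I-sparse at `b`, since `ℝ` is a measurable cover of it and has upper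
I-density `1`; so every open `U n ∋ b` contains a point `x n ≠ b`, and `V = (range x)ᶜ` works.
-/

instance AdmissibleIdeal.filter_neBot (I : AdmissibleIdeal) : I.filter.NeBot := by
  refine Filter.neBot_iff.2 fun h => I.univ_not_mem ?_
  have hempty : (∅ : Set ℕ) ∈ I.filter := h ▸ Filter.mem_bot
  rwa [AdmissibleIdeal.filter, Filter.mem_comk, Set.compl_empty] at hempty

lemma volume_Icc_add_inv (p : ℝ) (n : ℕ) :
    volume (Icc p (p + ((n : ℝ) + 1)⁻¹)) = ((n : ℝ≥0∞) + 1)⁻¹ := by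
  rw [Real.volume_Icc, add_sub_cancel_left, ENNReal.ofReal_inv_of_pos (by positivity)]
  norm_cast

-- `(0 : ℝ≥0∞)⁻¹ = ∞`, so the index `n = 0` imposes no condition.
lemma admissibleSeq_Icc_add_inv (I : AdmissibleIdeal) (p : ℝ) :
    AdmissibleSeq I p (fun n => Icc p (p + ((n : ℝ) + 1)⁻¹)) := by
  have hlen : ∀ n : ℕ, p ≤ p + ((n : ℝ) + 1)⁻¹ :=
    fun n => le_add_of_nonneg_right (by positivity)
  refine ⟨fun n => ⟨p, _, hlen n, rfl⟩, fun n => ⟨le_rfl, hlen n⟩, ?_⟩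
  refine Filter.univ_mem' fun n => ⟨?_, ?_⟩ <;> rw [volume_Icc_add_inv]
  · simp
  · exact ENNReal.inv_lt_inv.2 (ENNReal.lt_add_right (ENNReal.natCast_ne_top n) one_ne_zero)

lemma ratioSeq_le_one (E : Set ℝ) (J : ℕ → Set ℝ) (n : ℕ) : ratioSeq E J n ≤ 1 :=
  ENNReal.toReal_le_of_le_ofReal zero_le_one <| by
    rw [ENNReal.ofReal_one]
    exact ENNReal.div_le_of_le_mul (by rw [one_mul]; exact measure_mono inter_subset_right)

lemma limsup_ratioSeq_le_upperIDensity {I : AdmissibleIdeal} {p : ℝ} {J : ℕ → Set ℝ}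
    (hJ : AdmissibleSeq I p J) (E : Set ℝ) :
    limsup (ratioSeq E J) I.filter ≤ upperIDensity I p E := by
  refine le_csSup ⟨1, ?_⟩ ⟨J, hJ, rfl⟩
  rintro _ ⟨J', -, rfl⟩
  exact limsup_le_of_le (isCoboundedUnder_le_of_le I.filter fun _ => ENNReal.toReal_nonneg)
    (Eventually.of_forall (ratioSeq_le_one E J'))

lemma upperIDensity_empty (I : AdmissibleIdeal) (p : ℝ) : upperIDensity I p ∅ = 0 := by
  have hratio : ∀ J, ratioSeq ∅ J = 0 := fun J => funext fun n => by simp [ratioSeq]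
  refine le_antisymm (Real.sSup_nonpos ?_) (Real.sSup_nonneg ?_) <;>
    rintro _ ⟨J, -, rfl⟩ <;> rw [hratio, Pi.zero_def, limsup_const]

lemma one_le_upperIDensity_univ (I : AdmissibleIdeal) (p : ℝ) : 1 ≤ upperIDensity I p univ := by
  have hratio : ratioSeq univ (fun n => Icc p (p + ((n : ℝ) + 1)⁻¹)) = 1 := by
    funext n
    simp only [ratioSeq, univ_inter, volume_Icc_add_inv]
    rw [ENNReal.div_self (by simp) (by simp)]
    rfl
  simpa [hratio, Pi.one_def] using
    limsup_ratioSeq_le_upperIDensity (admissibleSeq_Icc_add_inv I p) univ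

lemma upperIDensity_congr_ae (I : AdmissibleIdeal) (p : ℝ) {E F : Set ℝ}
    (h : E =ᵐ[volume] F) : upperIDensity I p E = upperIDensity I p F := by
  have hratio : ∀ J, ratioSeq E J = ratioSeq F J := fun J => funext fun n => by
    simp only [ratioSeq, measure_congr (ae_eq_set_inter h (ae_eq_refl (J n)))]
  simp only [upperIDensity, hratio]

lemma IsMeasurableCover.measure_eq_zero {C A : Set ℝ} (hC : IsMeasurableCover C A)
    (hA : volume A = 0) : volume C = 0 := by
  have hdiff : volume (C \ toMeasurable volume A) = 0 :=
    hC.2.2 _ (hC.1.diff (measurableSet_toMeasurable _ _))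
      (sdiff_subset_sdiff_right (subset_toMeasurable _ _))
  refine measure_mono_null (subset_sdiff_union C (toMeasurable volume A))
    (measure_union_null hdiff ?_)
  rwa [measure_toMeasurable]

lemma iSparseAt_of_measure_zero (I : AdmissibleIdeal) {A : Set ℝ} (hA : volume A = 0) (x : ℝ) :
    ISparseAt I A x := by
  intro B _ hB C hC
  rwa [upperIDensity_congr_ae I x
    (union_ae_eq_right_of_ae_eq_empty (ae_eq_empty.2 (hC.measure_eq_zero hA)))]

lemma not_iSparseAt_compl_singleton (I : AdmissibleIdeal) (x : ℝ) : ¬ ISparseAt I {x}ᶜ x := by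
  intro hsparse
  have hcover : IsMeasurableCover univ {x}ᶜ := by
    refine ⟨MeasurableSet.univ, subset_univ _, fun F _ hF => ?_⟩
    exact measure_mono_null (by simpa using hF) (Real.volume_singleton (a := x))
  have := hsparse ∅ MeasurableSet.empty (by simp [upperIDensity_empty]) univ hcover
  rw [union_empty] at this
  exact this.not_ge (one_le_upperIDensity_univ I x)

lemma compl_mem_sparseTop_of_measure_zero (I : AdmissibleIdeal) {A : Set ℝ}
    (hA : volume A = 0) : Aᶜ ∈ sparseTop I := fun x _ => by
  rw [compl_compl]
  exact iSparseAt_of_measure_zero I hA x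

lemma exists_ne_of_mem_sparseTop {I : AdmissibleIdeal} {U : Set ℝ} (hU : U ∈ sparseTop I)
    {b : ℝ} (hb : b ∈ U) : ∃ y ∈ U, y ≠ b := by
  by_contra! h
  rw [eq_singleton_iff_unique_mem.2 ⟨hb, h⟩] at hU
  exact not_iSparseAt_compl_singleton I b (hU b rfl)

/-- The I-sparse set topology is not first countable: no point has a countable
neighborhood basis. -/
theorem sparseTop_not_first_countable (I : AdmissibleIdeal) (b : ℝ)
    (U : ℕ → Set ℝ) (hU : ∀ n, U n ∈ sparseTop I ∧ b ∈ U n) :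
    ∃ V ∈ sparseTop I, b ∈ V ∧ ∀ n, ¬ U n ⊆ V := by
  choose x hxU hxb using fun n => exists_ne_of_mem_sparseTop (hU n).1 (hU n).2
  have hnull : volume (range x) = 0 := (countable_range x).measure_zero volume
  refine ⟨(range x)ᶜ, compl_mem_sparseTop_of_measure_zero I hnull, ?_,
    fun n hsub => hsub (hxU n) (mem_range_self n)⟩
  rintro ⟨n, hn⟩
  exact hxb n hn
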